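/- For every natural number n ≥ 1 and complex number a, ∑_{k=0}^{n} (-n)_k (a)_k 2^k / ((-2n+1)_k k!) = (2^{2n-1} (n-1)! / (2n-1)!) · ((a/2 + 1/2)_n + (a/2)_n). -/

import Mathlib

/-!
Since `(-n)_k / (-2n+1)_k = n! (n-1)! / (2n-1)! · C(2n-1-k, n-1)`, the claim is
`2 n! ∑_k C(2n-1-k, n-1) 2^k (a)_k / k! = 4^n ((a/2 + 1/2)_n + (a/2)_n)`.
Absorption, `2n C(2n-1-k, n-1) = n C(2n-k, n) + k C(2n-1-k, n-1)`, together with the shift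
`k (a)_k = a (a+1)_(k-1)`, writes the left side through the sums
`E_m(a) = ∑_k C(2m-k, m) 2^k (a)_k / k!` at `(m, a) = (n, a)` and `(n-1, a+1)`.
These obey `(m+1) E_(m+1)(a) = 2 (a+2m+1) E_m(a)`, hence `m! E_m(a) = 4^m (a/2 + 1/2)_m`.
-/

open Finset

/-- The Pochhammer symbol (rising factorial) `(x)_k = x (x+1) ⋯ (x+k-1)`. -/
noncomputable def poch (x : ℂ) (k : ℕ) : ℂ := (ascPochhammer ℂ k).eval x

open Nat

lemma poch_succ (x : ℂ) (k : ℕ) : poch x (k + 1) = poch x k * (x + k) :=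
  ascPochhammer_succ_eval k x

lemma poch_succ' (x : ℂ) (k : ℕ) : poch x (k + 1) = x * poch (x + 1) k := by
  simp [poch, ascPochhammer_succ_left]

lemma poch_neg_natCast (N k : ℕ) : poch (-(N : ℂ)) k = (-1) ^ k * N.descFactorial k := by
  rw [poch, ascPochhammer_eval_neg_eq_descPochhammer, descPochhammer_eval_eq_descFactorial]

/-- `2^k (a)_k / k!`, the coefficient of `x^k` in `(1 - 2x)^(-a)`. -/
noncomputable def pochTerm (a : ℂ) (k : ℕ) : ℂ := 2 ^ k * poch a k / k !

lemma succ_mul_pochTerm_succ (a : ℂ) (k : ℕ) :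
    (k + 1 : ℂ) * pochTerm a (k + 1) = 2 * (a + k) * pochTerm a k := by
  simp only [pochTerm, poch_succ, factorial_succ, cast_mul, cast_succ]
  field_simp
  ring

lemma succ_mul_pochTerm_succ' (a : ℂ) (k : ℕ) :
    (k + 1 : ℂ) * pochTerm a (k + 1) = 2 * a * pochTerm (a + 1) k := by
  simp only [pochTerm, poch_succ', factorial_succ, cast_mul, cast_succ]
  field_simp
  ring

noncomputable def evenChooseSum (n : ℕ) (a : ℂ) : ℂ :=
  ∑ k ∈ range (n + 1), ((2 * n - k).choose n : ℂ) * pochTerm a k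

noncomputable def oddChooseSum (n : ℕ) (a : ℂ) : ℂ :=
  ∑ k ∈ range (n + 2), ((2 * n + 1 - k).choose n : ℂ) * pochTerm a k

lemma sum_natCast_mul_choose_mul_pochTerm (n : ℕ) (a : ℂ) :
    ∑ k ∈ range (n + 2), (k : ℂ) * (((2 * n + 1 - k).choose n : ℂ) * pochTerm a k)
      = ∑ k ∈ range (n + 1),
          ((2 * n - k).choose n : ℂ) * ((k + 1 : ℂ) * pochTerm a (k + 1)) := by
  rw [sum_range_succ']
  simp only [cast_zero, zero_mul, add_zero, cast_succ]
  refine sum_congr rfl fun k _ => ?_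
  rw [show 2 * n + 1 - (k + 1) = 2 * n - k by omega]
  ring

lemma succ_mul_evenChooseSum_succ (n : ℕ) (a : ℂ) :
    (n + 1 : ℂ) * evenChooseSum (n + 1) a = 2 * (a + 2 * n + 1) * evenChooseSum n a := by
  have hsplit : ∀ k ∈ range (n + 2), (n + 1) * (2 * (n + 1) - k).choose (n + 1)
      = k * (2 * n + 1 - k).choose n + 2 * ((n + 1) * (2 * n + 1 - k).choose (n + 1)) := by
    intro k hk
    have hk : k ≤ n + 1 := mem_range_succ_iff.mp hk
    have absorb := choose_succ_right_eq (2 * n + 1 - k) n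
    rw [show 2 * n + 1 - k - n = n + 1 - k by omega] at absorb
    rw [show 2 * (n + 1) - k = 2 * n + 1 - k + 1 by omega, choose_succ_succ']
    have hkj : n + 1 = k + (n + 1 - k) := by omega
    generalize (2 * n + 1 - k).choose n = A at *
    generalize (2 * n + 1 - k).choose (n + 1) = B at *
    generalize n + 1 - k = j at *
    nlinarith [congrArg (· * A) hkj]
  have drop_last :
      ∑ k ∈ range (n + 2), ((n + 1) * (2 * n + 1 - k).choose (n + 1) : ℂ) * pochTerm a k
        = ∑ k ∈ range (n + 1),
            ((2 * n + 1 - k : ℕ) : ℂ) * (((2 * n - k).choose n : ℂ) * pochTerm a k) := by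
    rw [sum_range_succ, show 2 * n + 1 - (n + 1) = n by omega, choose_succ_self, cast_zero,
      mul_zero, zero_mul, add_zero]
    refine sum_congr rfl fun k hk => ?_
    have hk : k ≤ n := mem_range_succ_iff.mp hk
    have absorb := add_one_mul_choose_eq (2 * n - k) n
    rw [show 2 * n - k + 1 = 2 * n + 1 - k by omega] at absorb
    rw [← mul_assoc, ← cast_mul, ← cast_succ, ← cast_mul, absorb, mul_comm (n + 1)]
  calc (n + 1 : ℂ) * evenChooseSum (n + 1) a
      = ∑ k ∈ range (n + 2), (k : ℂ) * (((2 * n + 1 - k).choose n : ℂ) * pochTerm a k)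
          + 2 * ∑ k ∈ range (n + 2),
              ((n + 1) * (2 * n + 1 - k).choose (n + 1) : ℂ) * pochTerm a k := by
        rw [evenChooseSum, mul_sum, mul_sum, ← sum_add_distrib]
        refine sum_congr rfl fun k hk => ?_
        have := congrArg (Nat.cast : ℕ → ℂ) (hsplit k hk)
        push_cast at this ⊢
        linear_combination pochTerm a k * this
    _ = ∑ k ∈ range (n + 1), ((2 * n - k).choose n : ℂ)
          * (2 * (a + k) + 2 * ((2 * n + 1 - k : ℕ) : ℂ)) * pochTerm a k := by
        rw [sum_natCast_mul_choose_mul_pochTerm, drop_last, mul_sum, ← sum_add_distrib]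
        simp_rw [succ_mul_pochTerm_succ]
        refine sum_congr rfl fun k _ => ?_
        ring
    _ = 2 * (a + 2 * n + 1) * evenChooseSum n a := by
        rw [evenChooseSum, mul_sum]
        refine sum_congr rfl fun k hk => ?_
        rw [cast_sub (by simp at hk; omega)]
        push_cast
        ring

lemma factorial_mul_evenChooseSum (n : ℕ) (a : ℂ) :
    n ! * evenChooseSum n a = 4 ^ n * poch (a / 2 + 1 / 2) n := by
  induction n with
  | zero => simp [evenChooseSum, pochTerm, poch]
  | succ n ih =>
    calc ((n + 1)! : ℂ) * evenChooseSum (n + 1) a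
        = n ! * ((n + 1 : ℂ) * evenChooseSum (n + 1) a) := by push_cast [factorial_succ]; ring
      _ = 4 ^ (n + 1) * poch (a / 2 + 1 / 2) (n + 1) := by
        rw [succ_mul_evenChooseSum_succ, poch_succ, mul_left_comm, ih]
        ring

lemma two_mul_succ_mul_oddChooseSum (m : ℕ) (a : ℂ) :
    2 * (m + 1 : ℂ) * oddChooseSum m a
      = (m + 1) * evenChooseSum (m + 1) a + 2 * a * evenChooseSum m (a + 1) := by
  have hsplit : ∀ k ∈ range (m + 2), 2 * (m + 1) * (2 * m + 1 - k).choose m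
      = (m + 1) * (2 * (m + 1) - k).choose (m + 1) + k * (2 * m + 1 - k).choose m := by
    intro k hk
    have hk : k ≤ m + 1 := mem_range_succ_iff.mp hk
    have absorb := add_one_mul_choose_eq (2 * m + 1 - k) m
    rw [show 2 * m + 1 - k + 1 = 2 * (m + 1) - k by omega] at absorb
    obtain ⟨j, hj⟩ : ∃ j, 2 * (m + 1) = k + j := ⟨2 * (m + 1) - k, by omega⟩
    rw [hj, show k + j - k = j by omega] at absorb ⊢
    nlinarith [absorb]
  calc 2 * (m + 1 : ℂ) * oddChooseSum m a
      = (m + 1) * evenChooseSum (m + 1) a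
          + ∑ k ∈ range (m + 2),
              (k : ℂ) * (((2 * m + 1 - k).choose m : ℂ) * pochTerm a k) := by
        rw [oddChooseSum, evenChooseSum, mul_sum, mul_sum, ← sum_add_distrib]
        refine sum_congr rfl fun k hk => ?_
        have := congrArg (Nat.cast : ℕ → ℂ) (hsplit k hk)
        push_cast at this ⊢
        linear_combination pochTerm a k * this
    _ = (m + 1) * evenChooseSum (m + 1) a + 2 * a * evenChooseSum m (a + 1) := by
        congr 1
        rw [sum_natCast_mul_choose_mul_pochTerm, evenChooseSum, mul_sum]
        simp_rw [succ_mul_pochTerm_succ']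
        refine sum_congr rfl fun k _ => ?_
        ring

lemma factorial_mul_oddChooseSum (m : ℕ) (a : ℂ) :
    2 * (m + 1)! * oddChooseSum m a
      = 4 ^ (m + 1) * (poch (a / 2 + 1 / 2) (m + 1) + poch (a / 2) (m + 1)) := by
  calc 2 * ((m + 1)! : ℂ) * oddChooseSum m a
      = (m + 1)! * evenChooseSum (m + 1) a + 2 * a * (m ! * evenChooseSum m (a + 1)) := by
        push_cast [factorial_succ]
        linear_combination (m ! : ℂ) * two_mul_succ_mul_oddChooseSum m a
    _ = 4 ^ (m + 1) * (poch (a / 2 + 1 / 2) (m + 1) + poch (a / 2) (m + 1)) := by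
        rw [factorial_mul_evenChooseSum, factorial_mul_evenChooseSum, poch_succ' (a / 2),
          show (a + 1) / 2 + 1 / 2 = a / 2 + 1 by ring]
        ring

lemma descFactorial_mul_factorial_two_mul_add_one (m k : ℕ) (hk : k ≤ m + 1) :
    (m + 1).descFactorial k * (2 * m + 1)!
      = (m + 1)! * m ! * (2 * m + 1 - k).choose m * (2 * m + 1).descFactorial k := by
  rw [← factorial_mul_descFactorial (show k ≤ 2 * m + 1 by omega),
    ← choose_mul_factorial_mul_factorial (show m ≤ 2 * m + 1 - k by omega),
    ← factorial_mul_descFactorial hk, show 2 * m + 1 - k - m = m + 1 - k by omega]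
  ring

lemma hypergeometricTerm_eq_mul_choose_mul_pochTerm (m k : ℕ) (hk : k ≤ m + 1) (a : ℂ) :
    poch (-((m + 1 : ℕ) : ℂ)) k * poch a k * 2 ^ k / (poch (-((2 * m + 1 : ℕ) : ℂ)) k * k !)
      = (m + 1)! * m ! / (2 * m + 1)! * (((2 * m + 1 - k).choose m : ℂ) * pochTerm a k) := by
  have hdesc : ((2 * m + 1).descFactorial k : ℂ) ≠ 0 := by
    exact_mod_cast (descFactorial_eq_zero_iff_lt.not.mpr (by omega))
  have key := congrArg (Nat.cast : ℕ → ℂ) (descFactorial_mul_factorial_two_mul_add_one m k hk)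
  push_cast at key
  rw [pochTerm, poch_neg_natCast, poch_neg_natCast]
  field_simp [factorial_ne_zero]
  linear_combination poch a k * key

theorem twoF1_negn_a_neg2nP1 (n : ℕ) (hn : 1 ≤ n) (a : ℂ) :
    ∑ k ∈ range (n + 1),
        poch (-(n : ℂ)) k * poch a k * 2 ^ k /
          (poch (-(2 * n : ℂ) + 1) k * (k.factorial : ℂ))
      = (2 : ℂ) ^ (2 * n - 1) * ((n - 1).factorial : ℂ) / (((2 * n - 1).factorial : ℂ)) *
          (poch (a / 2 + 1 / 2) n + poch (a / 2) n) := by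
  obtain ⟨m, rfl⟩ : ∃ m, n = m + 1 := ⟨n - 1, by omega⟩
  rw [show -(2 * ((m + 1 : ℕ) : ℂ)) + 1 = -((2 * m + 1 : ℕ) : ℂ) by push_cast; ring,
    show 2 * (m + 1) - 1 = 2 * m + 1 by omega, add_tsub_cancel_right,
    sum_congr rfl fun k hk =>
      hypergeometricTerm_eq_mul_choose_mul_pochTerm m k (mem_range_succ_iff.mp hk) a,
    ← mul_sum]
  change (_ : ℂ) * oddChooseSum m a = _
  calc ((m + 1)! * m ! / (2 * m + 1)! : ℂ) * oddChooseSum m a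
      = m ! / (2 * m + 1)! * (2 * (m + 1)! * oddChooseSum m a) / 2 := by ring
    _ = _ := by
      rw [factorial_mul_oddChooseSum, show (4 : ℂ) = 2 ^ 2 by norm_num, ← pow_mul]
      ring
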